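/- arXiv:1806.02041 — 7 statements merged into one kernel-verified Lean document; each statement's English description precedes it below -/
import Mathlib

section
/- (Refinement Lemma) Let X be a metric space, let X_1, …, X_n ⊆ X and, for each i, let 𝒴_i be a finite family of sets partitioning X_i. For any open U ⊆ X, if Alternator wins the game H_U(X_1, …, X_n), then there exist Y_1 ∈ 𝒴_1, …, Y_n ∈ 𝒴_n such that Alternator wins H_U(Y_1, …, Y_n). -/
/-- `AltWins U Xs` : Alternator wins the game `H_U(X_1,…,X_n)`. -/
def AltWins {X : Type*} [TopologicalSpace X] : Set X → List (Set X) → Prop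
  | _, [] => True
  | U, A :: rest => ∃ x, x ∈ U ∩ A ∧
      ∀ V : Set X, IsOpen V → x ∈ V → V ⊆ U → AltWins V rest

lemma AltWins.mono {X : Type*} [TopologicalSpace X] :
    ∀ (Xs : List (Set X)) {W V : Set X}, IsOpen W → AltWins W Xs → W ⊆ V →
      AltWins V Xs
  | [], _, _, _, _, _ => trivial
  | A :: rest, W, V, hW, h, hWV => by
    obtain ⟨x, ⟨hxW, hxA⟩, hstep⟩ := h
    exact ⟨x, ⟨hWV hxW, hxA⟩, fun V' hV' hxV' hV'V =>
      AltWins.mono rest (hV'.inter hW)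
        (hstep (V' ∩ W) (hV'.inter hW) ⟨hxV', hxW⟩ Set.inter_subset_right)
        Set.inter_subset_left⟩

lemma finite_choices {X : Type*} (Ys : List (Finset (Set X))) :
    {l : List (Set X) | List.Forall₂ (fun Z Yi => Z ∈ Yi) l Ys}.Finite := by
  induction Ys with
  | nil =>
    apply Set.Finite.subset (Set.finite_singleton ([] : List (Set X)))
    intro l hl
    simp only [Set.mem_setOf_eq, List.forall₂_nil_right_iff] at hl
    simp [hl]
  | cons Y Ys ih =>
    apply Set.Finite.subset (((Y : Set (Set X)).toFinite.prod ih).image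
      (fun p => p.1 :: p.2))
    rintro l hl
    simp only [Set.mem_setOf_eq, List.forall₂_cons_right_iff] at hl
    obtain ⟨a, l', ha, hl', rfl⟩ := hl
    exact ⟨(a, l'), ⟨ha, hl'⟩, rfl⟩

/-- Refinement Lemma: if each `X_i` is partitioned into a finite family `𝒴_i`
and Alternator wins `H_U(X_1,…,X_n)`, then he wins `H_U(Y_1,…,Y_n)` for some
choice of parts `Y_i ∈ 𝒴_i`. -/
theorem refinement_lemma {X : Type*} [MetricSpace X]
    (Xs : List (Set X)) (Ys : List (Finset (Set X))) (U : Set X)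
    (hU : IsOpen U)
    (hpart : List.Forall₂
      (fun (Xi : Set X) (Yi : Finset (Set X)) =>
        ⋃₀ (↑Yi : Set (Set X)) = Xi ∧ (↑Yi : Set (Set X)).Pairwise Disjoint)
      Xs Ys)
    (hwin : AltWins U Xs) :
    ∃ Zs : List (Set X),
      List.Forall₂ (fun (Z : Set X) (Yi : Finset (Set X)) => Z ∈ Yi) Zs Ys ∧
      AltWins U Zs := by
  induction hpart generalizing U with
  | nil => exact ⟨[], List.Forall₂.nil, trivial⟩
  | @cons A Yi rest Ys' hAY hrest ih =>
    obtain ⟨x, ⟨hxU, hxA⟩, hstep⟩ := hwin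
    -- pick the part of Yi containing x
    rw [← hAY.1] at hxA
    obtain ⟨Y, hYmem, hxY⟩ := hxA
    -- for each k, a winning refinement on a small ball
    have hball : ∀ k : ℕ, ∃ Zs : List (Set X),
        List.Forall₂ (fun Z Yi => Z ∈ Yi) Zs Ys' ∧
        AltWins (U ∩ Metric.ball x (1 / ((k : ℝ) + 1))) Zs := by
      intro k
      have hpos : (0:ℝ) < 1 / ((k : ℝ) + 1) := by positivity
      exact ih (U ∩ Metric.ball x (1 / ((k : ℝ) + 1)))
        (hU.inter Metric.isOpen_ball)
        (hstep _ (hU.inter Metric.isOpen_ball)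
          ⟨hxU, Metric.mem_ball_self hpos⟩ Set.inter_subset_left)
    choose f hf1 hf2 using hball
    -- pigeonhole
    have hfin := finite_choices Ys'
    have : Finite ↥{l : List (Set X) | List.Forall₂ (fun Z Yi => Z ∈ Yi) l Ys'} :=
      hfin.to_subtype
    obtain ⟨⟨z, hz⟩, hinf⟩ := Finite.exists_infinite_fiber
      (fun k : ℕ => (⟨f k, hf1 k⟩ : {l : List (Set X) |
        List.Forall₂ (fun Z Yi => Z ∈ Yi) l Ys'}))
    rw [Set.infinite_coe_iff] at hinf
    refine ⟨Y :: z, List.Forall₂.cons hYmem hz, x, ⟨hxU, hxY⟩, ?_⟩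
    intro V hV hxV hVU
    obtain ⟨ε, hε, hballV⟩ := Metric.isOpen_iff.1 hV x hxV
    obtain ⟨k, hk, hkε⟩ : ∃ k : ℕ, f k = z ∧ 1 / ((k : ℝ) + 1) < ε := by
      obtain ⟨k, hkmem, hklt⟩ := hinf.exists_gt ⌈1/ε⌉₊
      refine ⟨k, by simpa [Subtype.ext_iff] using hkmem, ?_⟩
      rw [div_lt_iff₀ (by positivity)]
      calc (1:ℝ) = ε * (1/ε) := by field_simp
        _ ≤ ε * ⌈1/ε⌉₊ := by
            exact mul_le_mul_of_nonneg_left (Nat.le_ceil _) hε.le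
        _ < ε * ((k:ℝ) + 1) := by
            apply mul_lt_mul_of_pos_left _ hε
            have : (⌈1/ε⌉₊ : ℝ) < (k : ℝ) := by exact_mod_cast hklt
            linarith
    have := hf2 k
    rw [hk] at this
    exact AltWins.mono _ (hU.inter Metric.isOpen_ball) this
      (fun y ⟨_, hy⟩ => hballV (Metric.ball_subset_ball hkε.le hy))
end

section
/- Let X be a topological space. Every set in the Boolean algebra generated by the open sets of X (i.e. every finite Boolean combination of open sets) is an n-difference of open sets for some n ∈ ℕ. Conversely, every n-difference of open sets is a finite Boolean combination of open sets. Hence BC(Σ⁰₁) = ⋃_{n∈ℕ} D_n(Σ⁰₁). -/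
/-- `Y` is an `n`-difference of open sets. -/
def IsNDiff {X : Type*} [TopologicalSpace X] (n : ℕ) (Y : Set X) : Prop :=
  ∃ A : ℕ → Set X, (∀ i, IsOpen (A i)) ∧ (∀ i j, i ≤ j → A i ⊆ A j) ∧
    ∀ x, x ∈ Y ↔ ∃ i, i < n ∧ x ∈ A i ∧ (∀ j, j < i → x ∉ A j) ∧ (n - i) % 2 = 1

/-- The Boolean algebra of sets generated by the open sets: finite Boolean
combinations of open sets. -/
inductive BCOpen {X : Type*} [TopologicalSpace X] : Set X → Prop
  | basic (U : Set X) : IsOpen U → BCOpen U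
  | compl (S : Set X) : BCOpen S → BCOpen Sᶜ
  | union (S T : Set X) : BCOpen S → BCOpen T → BCOpen (S ∪ T)

/-!
An `n`-difference of open sets is the same thing as a set `{x | Odd (r x)}` for a lower
semicontinuous rank `r : X → ℕ` bounded by `n`: given the increasing open sets `A i`, take
`r x = n - i` for the least `i < n` with `x ∈ A i` (and `r x = 0` if there is none), so that
`A i = {x | n ≤ i + r x}` for `i < n`. Ranks make the Boolean operations easy: `r + 1` is a
rank of the complement, and a rank of a union is obtained by combining two ranks with a
monotone function that is odd exactly when one of its arguments is. Conversely
`{r odd} = {r > 0} \ {r - 1 odd}` exhibits `{r odd}` as a Boolean combination of open sets by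
induction on the bound.
-/

open Set Filter Topology

lemma exists_first_odd_iff_odd {p : ℕ → Prop} {n r : ℕ} (hr : r ≤ n)
    (hp : ∀ i < n, p i ↔ n ≤ i + r) :
    (∃ i, i < n ∧ p i ∧ (∀ j, j < i → ¬ p j) ∧ (n - i) % 2 = 1) ↔ Odd r := by
  rw [Nat.odd_iff]
  constructor
  · rintro ⟨i, hi, hpi, hfirst, hparity⟩
    rw [hp i hi] at hpi
    have hprev : i = 0 ∨ i - 1 + r < n := by
      rcases Nat.eq_zero_or_pos i with h | h
      · exact Or.inl h
      · exact Or.inr (not_le.mp ((hp _ (by omega)).not.mp (hfirst _ (by omega))))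
    omega
  · intro hr_odd
    refine ⟨n - r, by omega, (hp _ (by omega)).mpr (by omega), fun j hj => ?_, by omega⟩
    rw [hp j (by omega)]
    omega

lemma Monotone.exists_rank {X : Type*} {A : ℕ → Set X} (hA : Monotone A) (n : ℕ) :
    ∃ r : X → ℕ, (∀ x, r x ≤ n) ∧ ∀ i < n, ∀ x, x ∈ A i ↔ n ≤ i + r x := by
  classical
  have hex : ∀ x, ∃ i, x ∈ A i ∨ n ≤ i := fun _ => ⟨n, Or.inr le_rfl⟩
  refine ⟨fun x => n - Nat.find (hex x), fun x => Nat.sub_le _ _, fun i hi x => ?_⟩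
  have hfind : Nat.find (hex x) ≤ n := Nat.find_min' _ (Or.inr le_rfl)
  have hmem : x ∈ A i ↔ ∃ j ≤ i, x ∈ A j ∨ n ≤ j :=
    ⟨fun h => ⟨i, le_rfl, Or.inl h⟩, fun ⟨j, hj, h⟩ => h.elim (hA hj ·) (by omega)⟩
  rw [hmem, ← Nat.find_le_iff (hex x)]
  dsimp only
  omega

def unionRank (a b : ℕ) : ℕ := if Odd a ∧ Odd b then a + b - 1 else a + b

lemma unionRank_mono {a a' b b' : ℕ} (ha : a ≤ a') (hb : b ≤ b') :
    unionRank a b ≤ unionRank a' b' := by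
  unfold unionRank
  split_ifs <;> simp only [Nat.odd_iff, not_and_or] at * <;> omega

lemma odd_unionRank_iff (a b : ℕ) : Odd (unionRank a b) ↔ Odd a ∨ Odd b := by
  unfold unionRank
  split_ifs <;> simp only [Nat.odd_iff, not_and_or] at * <;> omega

lemma unionRank_le (a b : ℕ) : unionRank a b ≤ a + b := by
  unfold unionRank
  split_ifs <;> omega

section Rank

variable {X : Type*} [TopologicalSpace X]

theorem isNDiff_iff_exists_lowerSemicontinuous {n : ℕ} {Y : Set X} :
    IsNDiff n Y ↔
      ∃ r : X → ℕ, LowerSemicontinuous r ∧ (∀ x, r x ≤ n) ∧ ∀ x, x ∈ Y ↔ Odd (r x) := by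
  constructor
  · rintro ⟨A, hopen, hmono, hY⟩
    obtain ⟨r, hle, hA⟩ := Monotone.exists_rank (fun i j h => hmono i j h) n
    refine ⟨r, lowerSemicontinuous_iff_isOpen_preimage.mpr fun k => ?_, hle, fun x => ?_⟩
    · rcases lt_or_ge k n with hk | hk
      · convert hopen (n - (k + 1)) using 1
        ext x
        rw [hA _ (by omega), mem_preimage, mem_Ioi]
        have := hle x
        omega
      · convert isOpen_empty
        ext x
        simp only [mem_preimage, mem_Ioi, mem_empty_iff_false, iff_false, not_lt]
        exact (hle x).trans hk
    · exact (hY x).trans (exists_first_odd_iff_odd (hle x) fun i hi => hA i hi x)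
  · rintro ⟨r, hr, hle, hY⟩
    refine ⟨fun i => r ⁻¹' Ioi (n - (i + 1)),
      fun i => lowerSemicontinuous_iff_isOpen_preimage.mp hr _,
      fun i j hij => preimage_mono (Ioi_subset_Ioi (by omega)), fun x => ?_⟩
    refine (hY x).trans (exists_first_odd_iff_odd (hle x) fun i hi => ?_).symm
    rw [mem_preimage, mem_Ioi]
    omega

lemma LowerSemicontinuous.eventually_le {f : X → ℕ} (hf : LowerSemicontinuous f) (x : X) :
    ∀ᶠ y in 𝓝 x, f x ≤ f y := by
  rcases Nat.eq_zero_or_pos (f x) with h | h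
  · simp [h]
  · filter_upwards [hf x (f x - 1) (by omega)] with y hy
    omega

lemma LowerSemicontinuous.comp_monotone₂ {f g : X → ℕ} {φ : ℕ → ℕ → ℕ}
    (hφ : ∀ ⦃a a' b b'⦄, a ≤ a' → b ≤ b' → φ a b ≤ φ a' b')
    (hf : LowerSemicontinuous f) (hg : LowerSemicontinuous g) :
    LowerSemicontinuous fun x => φ (f x) (g x) := fun x k hk => by
  filter_upwards [hf.eventually_le x, hg.eventually_le x] with y hfy hgy
  exact hk.trans_le (hφ hfy hgy)

lemma IsOpen.isNDiff_one {U : Set X} (hU : IsOpen U) : IsNDiff 1 U := by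
  refine isNDiff_iff_exists_lowerSemicontinuous.mpr
    ⟨U.indicator 1, hU.lowerSemicontinuous_indicator zero_le_one, fun x => ?_, fun x => ?_⟩ <;>
    by_cases hx : x ∈ U <;> simp [hx]

lemma IsNDiff.compl {n : ℕ} {Y : Set X} (hY : IsNDiff n Y) : IsNDiff (n + 1) Yᶜ := by
  obtain ⟨r, hr, hle, hmem⟩ := isNDiff_iff_exists_lowerSemicontinuous.mp hY
  refine isNDiff_iff_exists_lowerSemicontinuous.mpr
    ⟨(· + 1) ∘ r, continuous_of_discreteTopology.comp_lowerSemicontinuous hr fun _ _ h => by omega,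
      fun x => by simp [hle x], fun x => ?_⟩
  rw [mem_compl_iff, hmem, Function.comp_apply, Nat.odd_add_one]

lemma IsNDiff.union {m n : ℕ} {Y Z : Set X} (hY : IsNDiff m Y) (hZ : IsNDiff n Z) :
    IsNDiff (m + n) (Y ∪ Z) := by
  obtain ⟨r, hr, hrle, hrY⟩ := isNDiff_iff_exists_lowerSemicontinuous.mp hY
  obtain ⟨s, hs, hsle, hsZ⟩ := isNDiff_iff_exists_lowerSemicontinuous.mp hZ
  refine isNDiff_iff_exists_lowerSemicontinuous.mpr
    ⟨fun x => unionRank (r x) (s x), hr.comp_monotone₂ (fun _ _ _ _ => unionRank_mono) hs,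
      fun x => (unionRank_le _ _).trans (add_le_add (hrle x) (hsle x)), fun x => ?_⟩
  rw [odd_unionRank_iff, mem_union, hrY, hsZ]

lemma bcOpen_setOf_odd {r : X → ℕ} (hr : LowerSemicontinuous r) {n : ℕ}
    (hle : ∀ x, r x ≤ n) : BCOpen {x | Odd (r x)} := by
  induction n generalizing r with
  | zero =>
    convert BCOpen.basic (∅ : Set X) isOpen_empty
    exact eq_empty_of_forall_notMem fun x => by simp [Nat.le_zero.mp (hle x)]
  | succ n ih =>
    have hpos : IsOpen {x | 0 < r x} := lowerSemicontinuous_iff_isOpen_preimage.mp hr 0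
    have hpred : BCOpen {x | Odd (r x - 1)} :=
      ih (r := fun x => r x - 1) (continuous_of_discreteTopology.comp_lowerSemicontinuous hr
        fun _ _ h => Nat.sub_le_sub_right h 1)
        fun x => by have := hle x; omega
    have hsplit : {x | Odd (r x)} = ({x | 0 < r x}ᶜ ∪ {x | Odd (r x - 1)})ᶜ := by
      ext x
      simp only [mem_ofPred_eq, mem_compl_iff, mem_union, not_or, not_not, Nat.odd_iff]
      omega
    rw [hsplit]
    exact .compl _ (.union _ _ (.compl _ (.basic _ hpos)) hpred)

lemma IsNDiff.bcOpen {n : ℕ} {Y : Set X} (hY : IsNDiff n Y) : BCOpen Y := by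
  obtain ⟨r, hr, hle, hmem⟩ := isNDiff_iff_exists_lowerSemicontinuous.mp hY
  rw [show Y = {x | Odd (r x)} from Set.ext hmem]
  exact bcOpen_setOf_odd hr hle

end Rank

/-- `BC(Σ⁰₁) = ⋃_{n} D_n(Σ⁰₁)`: a set is a finite Boolean combination of open
sets iff it is an `n`-difference of open sets for some `n`. -/
theorem bcOpen_iff_exists_nDiff {X : Type*} [TopologicalSpace X] (Y : Set X) :
    BCOpen Y ↔ ∃ n, IsNDiff n Y := by
  refine ⟨fun h => ?_, fun ⟨_, hn⟩ => hn.bcOpen⟩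
  induction h with
  | basic U hU => exact ⟨1, hU.isNDiff_one⟩
  | compl S _ ih =>
    obtain ⟨n, hn⟩ := ih
    exact ⟨n + 1, hn.compl⟩
  | union S T _ _ ihS ihT =>
    obtain ⟨m, hm⟩ := ihS
    obtain ⟨n, hn⟩ := ihT
    exact ⟨m + n, hm.union hn⟩
end

section
/- Let X be a nonempty complete metric space and Y ⊆ X such that both Y and its complement Yᶜ are Gδ sets. Then Alternator does not win the infinite alternating game on Y: ¬ AltWinsInf Y. -/
open Set Metric

/-- Alternator wins the infinite-duration alternating game `H^∞(Y)`, phrased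
via an invariant family of winning positions. -/
def AltWinsInf {X : Type*} [TopologicalSpace X] (Y : Set X) : Prop :=
  ∃ W : Set X → Bool → Prop, W Set.univ true ∧
    ∀ U b, W U b → ∃ x ∈ U, (if b then x ∈ Y else x ∉ Y) ∧
      ∀ V : Set X, IsOpen V → x ∈ V → V ⊆ U → W V (!b)

/-- In a nonempty complete metric space, if both `Y` and `Yᶜ` are Gδ then
Alternator does not win the infinite alternating game on `Y`. -/
theorem not_altWinsInf_of_gdelta {X : Type*} [MetricSpace X] [CompleteSpace X]
    [Nonempty X] (Y : Set X) (hY : IsGδ Y) (hYc : IsGδ Yᶜ) :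
    ¬ AltWinsInf Y := by
  rintro ⟨W, hWuniv, hW⟩
  obtain ⟨A, hAopen, hAeq⟩ := hY.eq_iInter_nat
  obtain ⟨B, hBopen, hBeq⟩ := hYc.eq_iInter_nat
  -- finite intersections
  set A' : ℕ → Set X := fun m => ⋂ i ∈ Finset.range (m + 1), A i with hA'
  set B' : ℕ → Set X := fun m => ⋂ i ∈ Finset.range (m + 1), B i with hB'
  have hA'open : ∀ m, IsOpen (A' m) := fun m =>
    isOpen_biInter_finset fun i _ => hAopen i
  have hB'open : ∀ m, IsOpen (B' m) := fun m =>
    isOpen_biInter_finset fun i _ => hBopen i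
  have hYA' : ∀ m, Y ⊆ A' m := by
    intro m y hy
    simp only [hA', mem_iInter]
    intro i _
    rw [hAeq] at hy
    exact mem_iInter.1 hy i
  have hYB' : ∀ m, Yᶜ ⊆ B' m := by
    intro m y hy
    simp only [hB', mem_iInter]
    intro i _
    rw [hBeq] at hy
    exact mem_iInter.1 hy i
  set bb : ℕ → Bool := fun n => decide (n % 2 = 1) with hbb
  have hbsucc : ∀ n, bb (n + 1) = !bb n := by
    intro n
    simp only [hbb, ← decide_not]
    exact decide_eq_decide.mpr (by omega)
  set C : ℕ → Set X := fun n => if bb n then A' (n + 1) else B' (n + 1) with hC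
  have hCopen : ∀ n, IsOpen (C n) := by
    intro n; simp only [hC]; split <;> [exact hA'open _; exact hB'open _]
  -- invariant
  set Good : ℕ → X × ℝ → Prop :=
    fun n p => 0 < p.2 ∧ p.2 ≤ (1 / 2 : ℝ) ^ n ∧ W (ball p.1 p.2) (bb n) with hGood
  -- initial state
  obtain ⟨x0, -, -, hstep0⟩ := hW Set.univ true hWuniv
  have h0 : Good 0 (x0, 1) := by
    refine ⟨one_pos, by norm_num, ?_⟩
    have := hstep0 (ball x0 1) isOpen_ball (mem_ball_self one_pos) (subset_univ _)
    simpa [hbb] using this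
  -- step
  have key : ∀ n (p : X × ℝ), Good n p → ∃ q : X × ℝ, Good (n + 1) q ∧
      closedBall q.1 q.2 ⊆ ball p.1 p.2 ∧ closedBall q.1 q.2 ⊆ C n := by
    rintro n ⟨x, r⟩ ⟨hr, hrle, hWb⟩
    obtain ⟨y, hyU, hyY, hst⟩ := hW (ball x r) (bb n) hWb
    have hyC : y ∈ C n := by
      simp only [hC]
      rcases Bool.eq_false_or_eq_true (bb n) with h | h
      · rw [h] at hyY ⊢
        rw [if_pos rfl] at hyY ⊢
        exact hYA' _ hyY
      · rw [h] at hyY ⊢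
        rw [if_neg (by simp)] at hyY ⊢
        exact hYB' _ hyY
    have hopen : IsOpen (ball x r ∩ C n) := isOpen_ball.inter (hCopen n)
    obtain ⟨ε, hε, hball⟩ := Metric.isOpen_iff.1 hopen y ⟨hyU, hyC⟩
    set ρ : ℝ := min (ε / 2) ((1 / 2 : ℝ) ^ (n + 1)) with hρ
    have hρpos : 0 < ρ := lt_min (by linarith) (by positivity)
    have hsub : closedBall y ρ ⊆ ball x r ∩ C n := by
      refine subset_trans ?_ hball
      intro z hz
      have : dist z y ≤ ρ := hz
      have : dist z y < ε := lt_of_le_of_lt this (lt_of_le_of_lt (min_le_left _ _) (by linarith))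
      exact this
    refine ⟨(y, ρ), ⟨hρpos, min_le_right _ _, ?_⟩, fun z hz => (hsub hz).1,
      fun z hz => (hsub hz).2⟩
    have := hst (ball y ρ) isOpen_ball (mem_ball_self hρpos)
      (fun z hz => (hsub (ball_subset_closedBall hz)).1)
    rwa [hbsucc n]
  choose nxt hnxt1 hnxt2 hnxt3 using key
  set s : ∀ n : ℕ, {p : X × ℝ // Good n p} :=
    fun n => Nat.rec ⟨(x0, 1), h0⟩ (fun n p => ⟨nxt n p.1 p.2, hnxt1 n p.1 p.2⟩) n with hs
  set x : ℕ → X := fun n => (s n).1.1 with hx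
  set r : ℕ → ℝ := fun n => (s n).1.2 with hr
  have hlink : ∀ n, closedBall (x (n + 1)) (r (n + 1)) ⊆ ball (x n) (r n) :=
    fun n => hnxt2 n (s n).1 (s n).2
  have hlinkC : ∀ n, closedBall (x (n + 1)) (r (n + 1)) ⊆ C n :=
    fun n => hnxt3 n (s n).1 (s n).2
  have hrpos : ∀ n, 0 < r n := fun n => (s n).2.1
  have hrle : ∀ n, r n ≤ (1 / 2 : ℝ) ^ n := fun n => (s n).2.2.1
  -- nesting
  have hnest : ∀ k m, closedBall (x (m + k)) (r (m + k)) ⊆ closedBall (x m) (r m) := by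
    intro k
    induction k with
    | zero => intro m; rfl
    | succ k ih =>
      intro m
      calc closedBall (x (m + (k + 1))) (r (m + (k + 1)))
          ⊆ ball (x (m + k)) (r (m + k)) := hlink (m + k)
        _ ⊆ closedBall (x (m + k)) (r (m + k)) := ball_subset_closedBall
        _ ⊆ closedBall (x m) (r m) := ih m
  have hmem : ∀ m k, m ≤ k → x k ∈ closedBall (x m) (r m) := by
    intro m k hmk
    obtain ⟨j, rfl⟩ := Nat.exists_eq_add_of_le hmk
    exact hnest j m (mem_closedBall_self (hrpos _).le)
  -- Cauchy
  have hcauchy : CauchySeq x := by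
    apply cauchySeq_of_le_geometric (1 / 2 : ℝ) 1 (by norm_num)
    intro n
    have h1 : x (n + 1) ∈ closedBall (x n) (r n) := hmem n (n + 1) (Nat.le_succ n)
    have : dist (x n) (x (n + 1)) ≤ r n := by rw [dist_comm]; exact h1
    calc dist (x n) (x (n + 1)) ≤ r n := this
      _ ≤ (1 / 2 : ℝ) ^ n := hrle n
      _ = 1 * (1 / 2 : ℝ) ^ n := (one_mul _).symm
  obtain ⟨z, hz⟩ := cauchySeq_tendsto_of_complete hcauchy
  have hzmem : ∀ m, z ∈ closedBall (x m) (r m) := by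
    intro m
    refine Metric.isClosed_closedBall.mem_of_tendsto hz ?_
    filter_upwards [Filter.eventually_ge_atTop m] with k hk
    exact hmem m k hk
  have hzC : ∀ n, z ∈ C n := fun n => hlinkC n (hzmem (n + 1))
  -- z ∈ Y
  have hzY : z ∈ Y := by
    rw [hAeq, mem_iInter]
    intro j
    have hb : bb (2 * j + 1) = true := by
      simp only [hbb]; exact decide_eq_true (by omega)
    have h2 := hzC (2 * j + 1)
    simp only [hC] at h2
    rw [if_pos hb] at h2
    simp only [hA', mem_iInter] at h2
    exact h2 j (Finset.mem_range.2 (by omega))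
  have hzYc : z ∈ Yᶜ := by
    rw [hBeq, mem_iInter]
    intro j
    have hb : bb (2 * j + 2) = false := by
      simp only [hbb]; exact decide_eq_false (by omega)
    have h2 := hzC (2 * j + 2)
    simp only [hC] at h2
    rw [if_neg (by simp [hb])] at h2
    simp only [hB', mem_iInter] at h2
    exact h2 j (Finset.mem_range.2 (by omega))
  exact hzYc hzY
end

section
/- (Consequence of Higman's Lemma) Let A be a finite type and L ⊆ List A a set of finite words that is closed under taking subwords (i.e. if w ∈ L and u is a sublist of w then u ∈ L). Then there exists a finite set of words w_1, …, w_N such that for all w: w ∉ L if and only if some w_i is a sublist of w. -/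
/-! Higman's Lemma makes the subword order on words over a finite alphabet a well-quasi-order, so
the subword-minimal words outside `L`, which form an antichain, are finitely many. Since `L` is
closed under subwords, a word lies outside `L` exactly when it contains one of them. -/

namespace List

variable {α : Type*}

theorem sublistForall₂_eq : SublistForall₂ ((· = ·) : α → α → Prop) = Sublist := by
  ext l₁ l₂
  simp [sublistForall₂_iff, forall₂_eq_eq_eq]

theorem wellQuasiOrdered_sublist [Finite α] : WellQuasiOrdered (@Sublist α) := by
  have higman := Set.PartiallyWellOrderedOn.partiallyWellOrderedOn_sublistForall₂ (· = ·)
    (Set.finite_univ.partiallyWellOrderedOn (r := ((· = ·) : α → α → Prop)))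
  simpa [sublistForall₂_eq, Set.partiallyWellOrderedOn_univ_iff] using higman

def sublistMinimals (s : Set (List α)) : Set (List α) :=
  {w | w ∈ s ∧ ∀ u ∈ s, u <+ w → u = w}

theorem isAntichain_sublistMinimals (s : Set (List α)) :
    IsAntichain Sublist (sublistMinimals s) :=
  fun _ hu _ hw hne hsub => hne (hw.2 _ hu.1 hsub)

theorem finite_sublistMinimals [Finite α] (s : Set (List α)) : (sublistMinimals s).Finite :=
  (isAntichain_sublistMinimals s).finite_of_wellQuasiOrdered wellQuasiOrdered_sublist

/-- A shortest word of `s` below `w` is subword-minimal in `s`. -/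
theorem exists_mem_sublistMinimals_sublist {s : Set (List α)} {w : List α} (hw : w ∈ s) :
    ∃ v ∈ sublistMinimals s, v <+ w := by
  obtain ⟨v, ⟨hvs, hvw⟩, hshortest⟩ := (measure length).wf.has_min {u | u ∈ s ∧ u <+ w}
    ⟨w, hw, Sublist.refl w⟩
  refine ⟨v, ⟨hvs, fun u hus huv => huv.eq_of_length ?_⟩, hvw⟩
  exact le_antisymm huv.length_le (not_lt.mp (hshortest u ⟨hus, huv.trans hvw⟩))

end List

open List in
/-- Consequence of Higman's Lemma: a subword-closed language of finite words
over a finite alphabet is characterised by finitely many forbidden subwords. -/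
theorem subword_closed_finitely_many_obstructions (A : Type*) [Finite A]
    (L : Set (List A))
    (hclosed : ∀ w ∈ L, ∀ u : List A, u.Sublist w → u ∈ L) :
    ∃ S : Finset (List A), ∀ w : List A, w ∉ L ↔ ∃ v ∈ S, v.Sublist w := by
  refine ⟨(finite_sublistMinimals Lᶜ).toFinset, fun w => ⟨fun hw => ?_, ?_⟩⟩
  · obtain ⟨v, hv, hvw⟩ := exists_mem_sublistMinimals_sublist (Set.mem_compl hw)
    exact ⟨v, (finite_sublistMinimals Lᶜ).mem_toFinset.mpr hv, hvw⟩
  · rintro ⟨v, hv, hvw⟩ hwL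
    exact ((finite_sublistMinimals Lᶜ).mem_toFinset.mp hv).1 (hclosed w hwL v hvw)
end

section
/- Let H be a finite type and S ⊆ List H a set of words closed under taking sublists. Define the alternation of a word as the length of the word obtained by iteratively deleting letters equal to their predecessor (equivalently, the number of maximal constant blocks). If S contains words of arbitrarily large alternation, then there exist g ≠ h ∈ H such that for every n ∈ ℕ, the word (g h)^n (g followed by h, repeated n times) belongs to S. -/
/-- The alternation of a word: the length after iteratively deleting letters
equal to their predecessor (the number of maximal constant blocks). -/
def alternation {H : Type*} [DecidableEq H] (w : List H) : ℕ :=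
  (w.destutter (· ≠ ·)).length

/-!
Deleting repeated letters turns a word of `S` into an alternating word of `S` of the same
alternation. Let `N_{g,h}(w)` be the largest `n` with `(g h)^n` a sublist of `w`. Peeling the
first two letters `g ≠ h` off an alternating word lowers `N_{g,h}` by at least one, so an
alternating word has length at most `2 ∑_{g ≠ h} N_{g,h} + 1`. If no pair had all its powers
in `S`, closure under sublists would bound every `N_{g,h}` on `S`, hence also the alternation.
-/

open List Finset

section

variable {H : Type*}

def pairPower (g h : H) (n : ℕ) : List H := (replicate n [g, h]).flatten

lemma length_pairPower (g h : H) (n : ℕ) : (pairPower g h n).length = 2 * n := by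
  simp [pairPower, mul_comm]

lemma pairPower_sublist_pairPower (g h : H) {m n : ℕ} (hmn : m ≤ n) :
    pairPower g h m <+ pairPower g h n := by
  rw [← Nat.add_sub_cancel' hmn]
  simp only [pairPower, replicate_add, flatten_append]
  exact sublist_append_left _ _

section

variable [DecidableEq H]

noncomputable def maxPairPower (g h : H) (w : List H) : ℕ :=
  Nat.findGreatest (fun n => pairPower g h n <+ w) w.length

lemma pairPower_maxPairPower_sublist (g h : H) (w : List H) :
    pairPower g h (maxPairPower g h w) <+ w :=
  Nat.findGreatest_spec (P := fun n => pairPower g h n <+ w) (Nat.zero_le _)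
    (by simp [pairPower])

lemma le_maxPairPower_of_sublist {g h : H} {w : List H} {n : ℕ}
    (hn : pairPower g h n <+ w) : n ≤ maxPairPower g h w := by
  refine Nat.le_findGreatest ?_ hn
  have := hn.length_le
  rw [length_pairPower] at this
  omega

lemma maxPairPower_mono (g h : H) {u w : List H} (huw : u <+ w) :
    maxPairPower g h u ≤ maxPairPower g h w :=
  le_maxPairPower_of_sublist ((pairPower_maxPairPower_sublist g h u).trans huw)

lemma maxPairPower_lt_maxPairPower_cons_cons (g h : H) (w : List H) :
    maxPairPower g h w < maxPairPower g h (g :: h :: w) := by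
  refine Nat.lt_of_succ_le (le_maxPairPower_of_sublist ?_)
  simpa [pairPower, replicate_succ] using
    (pairPower_maxPairPower_sublist g h w).cons_cons h |>.cons_cons g

lemma maxPairPower_lt_of_not_mem {S : Set (List H)}
    (hclosed : ∀ w ∈ S, ∀ u : List H, u <+ w → u ∈ S) {g h : H} {w : List H} {n : ℕ}
    (hw : w ∈ S) (hn : pairPower g h n ∉ S) : maxPairPower g h w < n := by
  by_contra! hle
  exact hn <| hclosed w hw _ <|
    (pairPower_sublist_pairPower g h hle).trans (pairPower_maxPairPower_sublist g h w)

lemma length_le_sum_maxPairPower [Fintype H] :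
    ∀ w : List H, w.IsChain (· ≠ ·) →
      w.length ≤ 2 * ∑ p ∈ univ.offDiag, maxPairPower p.1 p.2 w + 1
  | [], _ | [_], _ => by simp
  | a :: b :: t, hw => by
    obtain ⟨hab, hbt⟩ := isChain_cons_cons.mp hw
    have ih := length_le_sum_maxPairPower t hbt.tail
    have hsum : ∑ p ∈ univ.offDiag, maxPairPower p.1 p.2 t <
        ∑ p ∈ univ.offDiag, maxPairPower p.1 p.2 (a :: b :: t) :=
      Finset.sum_lt_sum
        (fun p _ => maxPairPower_mono p.1 p.2 ((sublist_cons_self b t).cons a))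
        ⟨(a, b), by simpa using hab, maxPairPower_lt_maxPairPower_cons_cons a b t⟩
    simp only [length_cons]
    omega
termination_by w => w.length

end

end

/-- If a subword-closed set of words over a finite alphabet has unbounded
alternation, then it contains all words `(g h)^n` for some fixed pair of
distinct letters `g ≠ h`. -/
theorem unbounded_alternation_pair {H : Type*} [Finite H] [DecidableEq H]
    (S : Set (List H))
    (hclosed : ∀ w ∈ S, ∀ u : List H, u.Sublist w → u ∈ S)
    (hunb : ∀ n : ℕ, ∃ w ∈ S, n ≤ alternation w) :
    ∃ g h : H, g ≠ h ∧ ∀ n : ℕ, (List.replicate n ([g, h])).flatten ∈ S := by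
  have := Fintype.ofFinite H
  by_contra! hcon
  choose! bound hbound using hcon
  obtain ⟨w, hwS, hw⟩ := hunb (2 * ∑ p ∈ univ.offDiag, bound p.1 p.2 + 2)
  have hdS : w.destutter (· ≠ ·) ∈ S := hclosed w hwS _ (w.destutter_sublist _)
  have hbounded : ∀ p ∈ (univ : Finset H).offDiag,
      maxPairPower p.1 p.2 (w.destutter (· ≠ ·)) ≤ bound p.1 p.2 := fun p hp =>
    (maxPairPower_lt_of_not_mem hclosed hdS (hbound _ _ (mem_offDiag.mp hp).2.2)).le
  have hlen := length_le_sum_maxPairPower _ (w.isChain_destutter (· ≠ ·))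
  have hsum := Finset.sum_le_sum hbounded
  unfold alternation at hw
  omega
end

section
/- Let Π be a set of 2^k pairwise distinct infinite binary sequences (elements of ℕ → Bool, identified with infinite binary paths). Then there exist finite binary words ε = w_0 ≺ w_1 ≺ … ≺ w_k (each a proper prefix of the next, i.e. strictly increasing in the prefix order) and sequences π_1, …, π_k ∈ Π such that for every i ∈ {1, …, k}: w_{i-1} is a prefix of π_i but w_i is not a prefix of π_i. -/
/-- A finite binary word `w` is a prefix of an infinite binary sequence `π`. -/
def IsPrefixOfSeq (w : List Bool) (π : ℕ → Bool) : Prop :=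
  ∀ j (h : j < w.length), w.get ⟨j, h⟩ = π j

open Classical in
lemma split_step (S : Finset (ℕ → Bool)) (w0 : List Bool) (hS : 2 ≤ S.card)
    (hw : ∀ π ∈ S, IsPrefixOfSeq w0 π) :
    ∃ (w1 : List Bool) (S' : Finset (ℕ → Bool)) (π1 : ℕ → Bool),
      S' ⊆ S ∧ π1 ∈ S ∧ w0 <+: w1 ∧ w0.length < w1.length ∧
      S.card ≤ 2 * S'.card ∧ (∀ π ∈ S', IsPrefixOfSeq w1 π) ∧
      IsPrefixOfSeq w0 π1 ∧ ¬ IsPrefixOfSeq w1 π1 := by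
  classical
  obtain ⟨a, ha, b, hb, hab⟩ := Finset.one_lt_card.1 hS
  have hP : ∃ j, ∃ x ∈ S, ∃ y ∈ S, x j ≠ y j := by
    by_contra h
    push_neg at h
    exact hab (funext fun j => h j a ha b hb)
  have hex : ∃ n, (∃ x ∈ S, ∃ y ∈ S, x n ≠ y n) ∧
      ∀ j < n, ∀ u ∈ S, ∀ v ∈ S, u j = v j := by
    refine ⟨Nat.find hP, Nat.find_spec hP, ?_⟩
    intro j hj u hu v hv
    have := Nat.find_min hP hj
    push_neg at this
    exact this u hu v hv
  obtain ⟨n, ⟨x, hx, y, hy, hxy⟩, hbelow⟩ := hex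
  have hlen : w0.length ≤ n := by
    by_contra h
    push_neg at h
    exact hxy ((hw x hx n h).symm.trans (hw y hy n h))
  -- key sub-claim
  have key : ∀ r ∈ S, ∀ s ∈ S, r n ≠ s n →
      S.card ≤ 2 * (S.filter (fun π => π n = r n)).card →
      ∃ (w1 : List Bool) (S' : Finset (ℕ → Bool)) (π1 : ℕ → Bool),
        S' ⊆ S ∧ π1 ∈ S ∧ w0 <+: w1 ∧ w0.length < w1.length ∧
        S.card ≤ 2 * S'.card ∧ (∀ π ∈ S', IsPrefixOfSeq w1 π) ∧
        IsPrefixOfSeq w0 π1 ∧ ¬ IsPrefixOfSeq w1 π1 := by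
    intro r hr s hs hrs hcard
    refine ⟨List.ofFn (fun i : Fin (n + 1) => r i), S.filter (fun π => π n = r n), s,
      Finset.filter_subset _ _, hs, ?_, ?_, hcard, ?_, hw s hs, ?_⟩
    · have heq : w0 = (List.ofFn (fun i : Fin (n + 1) => r i)).take w0.length := by
        clear hcard
        apply List.ext_getElem
        · simp [List.length_ofFn]
          omega
        · intro j h1 h2
          rw [List.getElem_take, List.getElem_ofFn]
          have := hw r hr j h1
          simpa [List.get_eq_getElem] using this
      rw [heq]
      exact List.take_prefix _ _
    · clear hcard; simp [List.length_ofFn]; omega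
    · intro π hπ j hj
      clear hcard
      rw [Finset.mem_filter] at hπ
      have hj' : j < n + 1 := by simpa [List.length_ofFn] using hj
      rw [List.get_ofFn]
      rcases Nat.lt_or_ge j n with h | h
      · exact hbelow j h r hr π hπ.1
      · have : j = n := by omega
        subst this
        exact hπ.2.symm
    · intro hpre
      have hn1 : n < (List.ofFn (fun i : Fin (n + 1) => r i)).length := by
        simp [List.length_ofFn]
      have := hpre n hn1
      rw [List.get_ofFn] at this
      exact hrs this
  have hsplit : (S.filter (fun π => π n = x n)).card
      + (S.filter (fun π => π n = y n)).card = S.card := by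
    have hy' : ∀ π : ℕ → Bool, (π n = y n) ↔ ¬ (π n = x n) := by
      intro π
      cases hxn : x n <;> cases hyn : y n <;> simp_all
    rw [Finset.filter_congr (fun π _ => (hy' π))]
    exact Finset.card_filter_add_card_filter_not _
  rcases Nat.le_or_le ((S.filter (fun π => π n = y n)).card)
      ((S.filter (fun π => π n = x n)).card) with h | h
  · exact key x hx y hy hxy
      (by rw [← hsplit, two_mul]; exact Nat.add_le_add_left h _)
  · exact key y hy x hx (Ne.symm hxy)
      (by rw [← hsplit, two_mul]; exact Nat.add_le_add_right h _)

lemma split_aux : ∀ (k : ℕ) (S : Finset (ℕ → Bool)) (w0 : List Bool),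
    2 ^ k ≤ S.card → (∀ π ∈ S, IsPrefixOfSeq w0 π) →
    ∃ (w : Fin (k + 1) → List Bool) (π : Fin k → (ℕ → Bool)),
      w 0 = w0 ∧
      (∀ i : Fin k, w i.castSucc <+: w i.succ ∧
        (w i.castSucc).length < (w i.succ).length) ∧
      ∀ i : Fin k, π i ∈ S ∧ IsPrefixOfSeq (w i.castSucc) (π i) ∧
        ¬ IsPrefixOfSeq (w i.succ) (π i) := by
  intro k
  induction k with
  | zero =>
    intro S w0 _ _
    exact ⟨fun _ => w0, Fin.elim0, rfl, fun i => i.elim0, fun i => i.elim0⟩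
  | succ k ih =>
    intro S w0 hcard hw
    have hpow : (1 : ℕ) ≤ 2 ^ k := Nat.one_le_two_pow
    have h2 : 2 ≤ S.card := le_trans (by rw [pow_succ]; omega) hcard
    obtain ⟨w1, S', π1, hSS, hπ1S, hpre, hlt, hhalf, hw1, hπ1w0, hπ1w1⟩ :=
      split_step S w0 h2 hw
    have hcard' : 2 ^ k ≤ S'.card := by
      have h3 : 2 ^ (k + 1) ≤ 2 * S'.card := le_trans hcard hhalf
      rw [pow_succ] at h3
      omega
    obtain ⟨w', π', hw'0, hchain, hπ'⟩ := ih S' w1 hcard' hw1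
    refine ⟨Fin.cons w0 w', Fin.cons π1 π', rfl, ?_, ?_⟩
    · intro i
      refine Fin.cases ?_ ?_ i
      · simpa [hw'0] using ⟨hpre, hlt⟩
      · intro j
        have h1 : (Fin.cons w0 w' : Fin (k + 2) → List Bool) (Fin.succ j).castSucc
            = w' j.castSucc := by
          rw [← Fin.succ_castSucc, Fin.cons_succ]
        have h2 : (Fin.cons w0 w' : Fin (k + 2) → List Bool) (Fin.succ j).succ
            = w' j.succ := by
          rw [Fin.cons_succ]
        rw [h1, h2]
        exact hchain j
    · intro i
      refine Fin.cases ?_ ?_ i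
      · simpa [hw'0] using ⟨hπ1S, hπ1w0, hπ1w1⟩
      · intro j
        have h1 : (Fin.cons w0 w' : Fin (k + 2) → List Bool) (Fin.succ j).castSucc
            = w' j.castSucc := by
          rw [← Fin.succ_castSucc, Fin.cons_succ]
        have h2 : (Fin.cons w0 w' : Fin (k + 2) → List Bool) (Fin.succ j).succ
            = w' j.succ := by
          rw [Fin.cons_succ]
        rw [Fin.cons_succ, h1, h2]
        exact ⟨hSS (hπ' j).1, (hπ' j).2⟩

/-- Given `2^k` pairwise distinct infinite binary paths, there is a strictly
increasing (in the proper-prefix order) chain of finite words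
`ε = w_0 ≺ w_1 ≺ … ≺ w_k` and paths `π_1, …, π_k` from the family such that
`π_i` extends `w_{i-1}` but not `w_i`. -/
theorem split_paths_by_prefixes (k : ℕ) (p : Fin (2 ^ k) → (ℕ → Bool))
    (hinj : Function.Injective p) :
    ∃ w : Fin (k + 1) → List Bool, w 0 = [] ∧
      (∀ i : Fin k, w i.castSucc <+: w i.succ ∧
        (w i.castSucc).length < (w i.succ).length) ∧
      ∃ π : Fin k → Fin (2 ^ k), ∀ i : Fin k,
        IsPrefixOfSeq (w i.castSucc) (p (π i)) ∧
        ¬ IsPrefixOfSeq (w i.succ) (p (π i)) := by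
  classical
  set S : Finset (ℕ → Bool) := Finset.image p Finset.univ with hSdef
  have hcard : 2 ^ k ≤ S.card := by
    rw [hSdef, Finset.card_image_of_injective _ hinj, Finset.card_univ, Fintype.card_fin]
  have hw : ∀ π ∈ S, IsPrefixOfSeq [] π := by
    intro π _ j hj
    simp at hj
  obtain ⟨w, π, hw0, hchain, hπ⟩ := split_aux k S [] hcard hw
  have hmem : ∀ i : Fin k, ∃ j : Fin (2 ^ k), p j = π i := by
    intro i
    have := (hπ i).1
    rw [hSdef, Finset.mem_image] at this
    obtain ⟨j, _, hj⟩ := this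
    exact ⟨j, hj⟩
  choose idx hidx using hmem
  refine ⟨w, hw0, hchain, idx, fun i => ?_⟩
  rw [hidx i]
  exact ⟨(hπ i).2.1, (hπ i).2.2⟩
end

section
/- Let V be a finite monoid acting on a set H (action written v·h), equipped with a map (·)^∞ : V → H satisfying the shift law (x*y)^∞ = x·((y*x)^∞) for all x, y ∈ V, and let N ≥ 1 be such that x^N * x^N = x^N for all x ∈ V; write x^♯ = x^N. Let 𝒲 ⊆ V × V and suppose the identity ((u2 * w2^♯ * v)^♯) · (u1 · (w1^∞)) = (u2 * w2^♯ * v)^∞ holds for all v ∈ V and all (u1,u2), (w1,w2) ∈ 𝒲 (where by abuse x·(h) for x ∈ V, h ∈ H denotes the action). Define edge (v,h) (v',h') iff ∃ (u1,u2) ∈ 𝒲, (w1,w2) ∈ 𝒲, z ∈ V with h = v·(u1·(w1^∞)) and v' = v * u2 * w2^♯ * z. Then for any two nodes (v,h), (v',h') with edge (v,h) (v',h') and edge (v',h') (v,h), we have h = h'. -/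
/-- The edge relation of the strategy graph, with `x^♯ = x^N`:
there is an edge from `(v,h)` to `(v',h')` iff there are
`(u1,u2), (w1,w2) ∈ 𝒲` and `z` with `h = v·(u1·(w1^∞))` and
`v' = v * u2 * w2^N * z`. -/
def StratEdgeN {V H : Type*} [Monoid V] [MulAction V H]
    (inf : V → H) (N : ℕ) (W : Set (V × V)) :
    V × H → V × H → Prop :=
  fun p q => ∃ u1 u2 w1 w2 z : V, (u1, u2) ∈ W ∧ (w1, w2) ∈ W ∧
    p.2 = p.1 • (u1 • inf w1) ∧ q.1 = p.1 * u2 * w2 ^ N * z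

private lemma fix_pow {V : Type*} [Monoid V] {a c : V} (h : a = a * c) :
    ∀ k : ℕ, a = a * c ^ k := by
  intro k
  induction k with
  | zero => simp
  | succ n ih => rw [pow_succ, ← mul_assoc, ← ih]; exact h

/-- If the "limit" identity holds in the algebra, then the strategy graph is
not recursive: two mutually reachable nodes have equal `H`-components. -/
theorem not_recursive_of_limit_identity {V H : Type*} [Monoid V] [Finite V]
    [MulAction V H] (inf : V → H)
    (hshift : ∀ x y : V, inf (x * y) = x • inf (y * x))
    (N : ℕ) (hN : 1 ≤ N) (hidem : ∀ x : V, x ^ N * x ^ N = x ^ N)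
    (W : Set (V × V))
    (hident : ∀ v u1 u2 w1 w2 : V, (u1, u2) ∈ W → (w1, w2) ∈ W →
      (u2 * w2 ^ N * v) ^ N • (u1 • inf w1) = inf (u2 * w2 ^ N * v))
    (p q : V × H)
    (hpq : StratEdgeN inf N W p q) (hqp : StratEdgeN inf N W q p) :
    p.2 = q.2 := by
  obtain ⟨u1, u2, w1, w2, z, hu, hw, hh, hv'⟩ := hpq
  obtain ⟨u1', u2', w1', w2', z', hu', hw', hh', hv⟩ := hqp
  set W1 : V := u2 * w2 ^ N * z with hW1
  set W2 : V := u2' * w2' ^ N * z' with hW2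
  have hv' : q.1 = p.1 * W1 := by rw [hW1, hv']; simp [mul_assoc]
  have hv : p.1 = q.1 * W2 := by rw [hW2, hv]; simp [mul_assoc]
  have hp : p.1 = p.1 * (W1 * W2) := by rw [← mul_assoc, ← hv', ← hv]
  have hq : q.1 = q.1 * (W2 * W1) := by rw [← mul_assoc, ← hv, ← hv']
  have e1 : (W1 * W2) = u2 * w2 ^ N * (z * W2) := by rw [hW1]; simp [mul_assoc]
  have e2 : (W2 * W1) = u2' * w2' ^ N * (z' * W1) := by rw [hW2]; simp [mul_assoc]
  have key1 : p.2 = p.1 • inf (W1 * W2) := by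
    calc p.2 = p.1 • (u1 • inf w1) := hh
      _ = (p.1 * (W1 * W2) ^ N) • (u1 • inf w1) := by rw [← fix_pow hp N]
      _ = p.1 • ((W1 * W2) ^ N • (u1 • inf w1)) := mul_smul _ _ _
      _ = p.1 • inf (W1 * W2) := by rw [e1, hident _ _ _ _ _ hu hw]
  have key2 : q.2 = q.1 • inf (W2 * W1) := by
    calc q.2 = q.1 • (u1' • inf w1') := hh'
      _ = (q.1 * (W2 * W1) ^ N) • (u1' • inf w1') := by rw [← fix_pow hq N]
      _ = q.1 • ((W2 * W1) ^ N • (u1' • inf w1')) := mul_smul _ _ _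
      _ = q.1 • inf (W2 * W1) := by rw [e2, hident _ _ _ _ _ hu' hw']
  rw [key1, key2, hshift W1 W2, ← mul_smul, ← hv']
end
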